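/- arXiv:2003.03840 — 2 statements merged into one kernel-verified Lean document; each statement's English description precedes it below -/
import Mathlib

section
/- Let n ≥ 2 and let L be a well-rounded lattice in ℝⁿ with minimal norm 1 possessing a nearly orthogonal basis. Then C(L) = 0 if and only if L is the image of ℤⁿ under an orthogonal transformation, i.e., if and only if L is spanned over ℤ by an orthonormal basis of ℝⁿ. -/
/-!
If `L = ℤu` with `u` orthonormal, inner products of lattice vectors are integers, and two unit
vectors that are not `±` each other have inner product of absolute value `< 1`, hence `0`.

Conversely, near orthogonality says that `b p` makes an angle of at least `π/3` with the span
`V_p` of the other basis vectors, so `|⟪v, c • b p⟫| ≤ ‖v‖ ‖c • b p‖ / 2` for `v ∈ V_p`. If a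
minimal vector `x` had two nonzero coordinates, splitting it as `x = v + c_p • b p` into two
nonzero lattice vectors of norm `≥ 1` forces `‖v‖ = 1` and `⟪x, v⟫ = 1/2`, contradicting
`C(L) = 0`. So every minimal vector is a multiple of a single basis vector; by well-roundedness
every `b p` occurs, so `‖b p‖ = 1`, and `C(L) = 0` then makes the basis orthonormal.
-/

open scoped RealInnerProductSpace
open Submodule Metric MeasureTheory

noncomputable section

abbrev Evec (n : ℕ) := EuclideanSpace ℝ (Fin n)

/-- The lattice generated (over ℤ) by the vectors `b 0, …, b (n-1)`. -/
def latticeOf {n : ℕ} (b : Fin n → Evec n) : Set (Evec n) :=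
  {x | ∃ c : Fin n → ℤ, x = ∑ i, (c i : ℝ) • b i}

/-- The set of minimal vectors `S(L)` of a lattice `L`. -/
def minVecs {n : ℕ} (L : Set (Evec n)) : Set (Evec n) :=
  {x | x ∈ L ∧ x ≠ 0 ∧ ∀ y ∈ L, y ≠ 0 → ‖x‖ ≤ ‖y‖}

/-- `L` is well-rounded: its minimal vectors span `ℝⁿ`. -/
def IsWellRounded {n : ℕ} (L : Set (Evec n)) : Prop :=
  Submodule.span ℝ (minVecs L) = ⊤

/-- `L` has minimal norm `m`. -/
def hasMinNorm {n : ℕ} (L : Set (Evec n)) (m : ℝ) : Prop :=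
  (∃ x ∈ L, x ≠ 0 ∧ ‖x‖ = m) ∧ ∀ x ∈ L, x ≠ 0 → m ≤ ‖x‖

/-- The angle in `[0, π/2]` between a vector `v` and a subspace `V`,
whose cosine is `‖proj_V v‖ / ‖v‖`. -/
def subAngle {n : ℕ} (v : Evec n) (V : Submodule ℝ (Evec n)) : ℝ :=
  Real.arccos (‖(orthogonalProjection V v : Evec n)‖ / ‖v‖)

/-- The ordered basis `b` is weakly θ-orthogonal. -/
def WeaklyOrth {n : ℕ} (θ : ℝ) (b : Fin n → Evec n) : Prop :=
  ∀ i : Fin n, 0 < (i : ℕ) →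
    θ ≤ subAngle (b i) (Submodule.span ℝ (b '' {j | j < i}))

/-- The basis `b` is θ-orthogonal: every ordering of it is weakly θ-orthogonal. -/
def Orth {n : ℕ} (θ : ℝ) (b : Fin n → Evec n) : Prop :=
  ∀ σ : Equiv.Perm (Fin n), WeaklyOrth θ (b ∘ σ)

/-- A nearly orthogonal basis is a π/3-orthogonal basis. -/
def NearlyOrth {n : ℕ} (b : Fin n → Evec n) : Prop := Orth (Real.pi / 3) b

/-- A weakly nearly orthogonal basis is a weakly π/3-orthogonal basis. -/
def WeaklyNearlyOrth {n : ℕ} (b : Fin n → Evec n) : Prop := WeaklyOrth (Real.pi / 3) b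

/-- Coherence `C(L)` of a lattice. -/
def coherence {n : ℕ} (L : Set (Evec n)) : ℝ :=
  sSup {t | ∃ x ∈ minVecs L, ∃ y ∈ minVecs L, x ≠ y ∧ x ≠ -y ∧
    t = abs ⟪x, y⟫ / (‖x‖ * ‖y‖)}

/-- `μ(B)`: minimal absolute cosine of angles between distinct basis vectors. -/
def muB {n : ℕ} (b : Fin n → Evec n) : ℝ :=
  sInf {t | ∃ i j : Fin n, i ≠ j ∧ t = abs ⟪b i, b j⟫ / (‖b i‖ * ‖b j‖)}

/-- `ν(B)`: maximal absolute cosine of angles between distinct basis vectors. -/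
def nuB {n : ℕ} (b : Fin n → Evec n) : ℝ :=
  sSup {t | ∃ i j : Fin n, i ≠ j ∧ t = abs ⟪b i, b j⟫ / (‖b i‖ * ‖b j‖)}

/-- The determinant of the lattice with basis `b`. -/
def latDet {n : ℕ} (b : Fin n → Evec n) : ℝ :=
  |(Matrix.of fun i j : Fin n => b j i).det|

/-- Packing density of a lattice with basis `b` and minimal norm `m`:
`ω_n · m^n / (2^n · det L)`. -/
def packDensity {n : ℕ} (m : ℝ) (b : Fin n → Evec n) : ℝ :=
  (volume (ball (0 : Evec n) 1)).toReal * m ^ n / (2 ^ n * latDet b)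

/-- `L` is strongly eutactic. -/
def StronglyEutactic {n : ℕ} (L : Set (Evec n)) : Prop :=
  ∃ c : ℝ, 0 < c ∧ ∀ v : Evec n, ‖v‖ ^ 2 = c * ∑ᶠ x ∈ minVecs L, ⟪v, x⟫ ^ 2

/-- `L` is perfect: `{x xᵀ : x ∈ S(L)}` spans the symmetric `n × n` matrices. -/
def IsPerfect {n : ℕ} (L : Set (Evec n)) : Prop :=
  ∀ A : Matrix (Fin n) (Fin n) ℝ, A.IsSymm →
    A ∈ Submodule.span ℝ ((fun x : Evec n => Matrix.of fun i j => x i * x j) '' minVecs L)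

end

section InnerProductSpace

variable {E : Type*} [NormedAddCommGroup E] [InnerProductSpace ℝ E]

lemma abs_inner_le_norm_mul_norm_starProjection {K : Submodule ℝ E} [K.HasOrthogonalProjection]
    {v : E} (hv : v ∈ K) (w : E) : |⟪v, w⟫| ≤ ‖v‖ * ‖K.starProjection w‖ := by
  rw [← K.starProjection_eq_self_iff.mpr hv, inner_starProjection_left_eq_right,
    K.starProjection_eq_self_iff.mpr hv]
  exact abs_real_inner_le_norm v _

lemma norm_eq_one_and_inner_add_eq_half {v w : E} (hv : 1 ≤ ‖v‖) (hw : 1 ≤ ‖w‖)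
    (hvw : |⟪v, w⟫| ≤ ‖v‖ * ‖w‖ / 2) (h : ‖v + w‖ ≤ 1) : ‖v‖ = 1 ∧ ⟪v + w, v⟫ = 1 / 2 := by
  have hsq : ‖v + w‖ ^ 2 = ‖v‖ ^ 2 + 2 * ⟪v, w⟫ + ‖w‖ ^ 2 := norm_add_sq_real v w
  have hvw' := neg_abs_le ⟪v, w⟫
  have hsq_le : ‖v + w‖ ^ 2 ≤ 1 := by nlinarith [norm_nonneg (v + w)]
  -- `‖v‖² - ‖v‖‖w‖ + ‖w‖² ≤ 1` while the left side is at least `‖v‖‖w‖ ≥ 1`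
  have hv1 : ‖v‖ = 1 := by nlinarith [sq_nonneg (‖v‖ - ‖w‖)]
  have hw1 : ‖w‖ = 1 := by nlinarith [sq_nonneg (‖v‖ - ‖w‖)]
  refine ⟨hv1, ?_⟩
  rw [inner_add_left, real_inner_self_eq_norm_sq, real_inner_comm]
  rw [hv1, hw1] at hsq hvw
  nlinarith [abs_le.mp hvw]

lemma inner_eq_zero_of_inner_eq_intCast {x y : E} (hx : ‖x‖ = 1) (hy : ‖y‖ = 1) (hxy : x ≠ y)
    (hxy' : x ≠ -y) {k : ℤ} (hk : ⟪x, y⟫ = k) : ⟪x, y⟫ = 0 := by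
  have hk1 : |(k : ℝ)| ≤ 1 := by simpa [hk, hx, hy] using abs_real_inner_le_norm x y
  have hk1' : |k| ≤ 1 := by exact_mod_cast hk1
  have hk_ne_one : k ≠ 1 := by
    rintro rfl
    exact hxy ((inner_eq_one_iff_of_norm_eq_one hx hy).mp (by simpa using hk))
  have hk_ne_neg_one : k ≠ -1 := by
    rintro rfl
    exact hxy' ((inner_eq_neg_one_iff_of_norm_eq_one hx hy).mp (by simpa using hk))
  have : k = 0 := by rw [abs_le] at hk1'; omega
  simp [hk, this]

end InnerProductSpace

lemma Module.Basis.exists_mem_coord_ne_zero {ι R M : Type*} [Semiring R] [Nontrivial R]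
    [AddCommMonoid M] [Module R M] (B : Module.Basis ι R M) {S : Set M} (hS : span R S = ⊤)
    (i : ι) : ∃ x ∈ S, B.coord i x ≠ 0 := by
  by_contra! h
  have hker : span R S ≤ LinearMap.ker (B.coord i) := span_le.mpr h
  rw [hS, top_le_iff, LinearMap.ker_eq_top] at hker
  simpa using LinearMap.congr_fun hker (B i)

lemma LinearIndependent.ne_neg {ι R M : Type*} [Ring R] [Nontrivial R] [AddCommGroup M]
    [Module R M] {b : ι → M} (hb : LinearIndependent R b) {i j : ι} (hij : i ≠ j) :
    b i ≠ -b j := by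
  classical
  intro h
  have := linearIndependent_iff'.mp hb {i, j} (fun _ => 1)
    (by simp [Finset.sum_pair hij, h]) i (by simp)
  exact one_ne_zero this

section Lattice

variable {n : ℕ}

lemma norm_starProjection_le_cos_mul {v : Evec n} {V : Submodule ℝ (Evec n)} {θ : ℝ}
    (hθ : 0 ≤ θ) (h : θ ≤ subAngle v V) : ‖V.starProjection v‖ ≤ Real.cos θ * ‖v‖ := by
  rcases eq_or_ne v 0 with rfl | hv
  · simp
  have hv' : 0 < ‖v‖ := norm_pos_iff.mpr hv
  rw [subAngle, ← starProjection_apply] at h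
  have hr1 : ‖V.starProjection v‖ / ‖v‖ ≤ 1 :=
    (div_le_one hv').mpr (V.norm_starProjection_apply_le v)
  have hcos := Real.cos_le_cos_of_nonneg_of_le_pi hθ (Real.arccos_le_pi _) h
  rwa [Real.cos_arccos (by linarith [show 0 ≤ ‖V.starProjection v‖ / ‖v‖ by positivity]) hr1,
    div_le_iff₀ hv'] at hcos

lemma Orth.le_subAngle {θ : ℝ} {b : Fin n → Evec n} (hn : 2 ≤ n) (h : Orth θ b) (p : Fin n) :
    θ ≤ subAngle (b p) (span ℝ (b '' {i | i ≠ p})) := by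
  obtain ⟨m, rfl⟩ := Nat.exists_eq_add_of_le' hn
  have hlast := h (Equiv.swap p (Fin.last (m + 1))) (Fin.last (m + 1)) (by simp)
  have himage : Equiv.swap p (Fin.last (m + 1)) '' {j | j < Fin.last (m + 1)} = {i | i ≠ p} := by
    ext i
    simp [Equiv.image_eq_preimage_symm, Fin.lt_last_iff_ne_last, Equiv.swap_apply_eq_iff]
  rw [Function.comp_apply, Equiv.swap_apply_right, Set.image_comp, himage] at hlast
  exact hlast

lemma NearlyOrth.abs_inner_smul_le {b : Fin n → Evec n} (hn : 2 ≤ n) (h : NearlyOrth b)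
    {p : Fin n} {v : Evec n} (hv : v ∈ span ℝ (b '' {i | i ≠ p})) (c : ℝ) :
    |⟪v, c • b p⟫| ≤ ‖v‖ * ‖c • b p‖ / 2 := by
  have hproj := norm_starProjection_le_cos_mul (by positivity) (h.le_subAngle hn p)
  rw [Real.cos_pi_div_three] at hproj
  calc |⟪v, c • b p⟫| = |c| * |⟪v, b p⟫| := by rw [real_inner_smul_right, abs_mul]
    _ ≤ |c| * (‖v‖ * (1 / 2 * ‖b p‖)) := by
      gcongr
      exact (abs_inner_le_norm_mul_norm_starProjection hv (b p)).trans
        (mul_le_mul_of_nonneg_left hproj (norm_nonneg v))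
    _ = ‖v‖ * ‖c • b p‖ / 2 := by rw [norm_smul, Real.norm_eq_abs]; ring

lemma latticeOf_eq_span (b : Fin n → Evec n) : latticeOf b = span ℤ (Set.range b) := by
  ext x
  simp [latticeOf, mem_span_range_iff_exists_fun, Int.cast_smul_eq_zsmul, eq_comm]

lemma mem_latticeOf_self (b : Fin n → Evec n) (i : Fin n) : b i ∈ latticeOf b :=
  latticeOf_eq_span b ▸ subset_span (Set.mem_range_self i)

lemma Orthonormal.exists_inner_eq_intCast {u : Fin n → Evec n} (hu : Orthonormal ℝ u)
    {x y : Evec n} (hx : x ∈ latticeOf u) (hy : y ∈ latticeOf u) : ∃ k : ℤ, ⟪x, y⟫ = k := by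
  obtain ⟨c, rfl⟩ := hx
  obtain ⟨d, rfl⟩ := hy
  refine ⟨∑ i, c i * d i, ?_⟩
  simpa using hu.inner_sum (fun i => (c i : ℝ)) (fun i => (d i : ℝ)) .univ

lemma norm_eq_one_of_mem_minVecs {L : Set (Evec n)} (hmin : hasMinNorm L 1) {x : Evec n}
    (hx : x ∈ minVecs L) : ‖x‖ = 1 := by
  obtain ⟨⟨y, hyL, hy0, hy1⟩, hlow⟩ := hmin
  exact le_antisymm (hy1 ▸ hx.2.2 y hyL hy0) (hlow x hx.1 hx.2.1)

lemma mem_minVecs_of_norm_eq_one {L : Set (Evec n)} (hmin : hasMinNorm L 1) {x : Evec n}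
    (hxL : x ∈ L) (hx : ‖x‖ = 1) : x ∈ minVecs L :=
  ⟨hxL, norm_ne_zero_iff.mp (by simp [hx]), fun y hyL hy0 => hx ▸ hmin.2 y hyL hy0⟩

lemma coherence_eq_zero_iff {L : Set (Evec n)} :
    coherence L = 0 ↔ ∀ x ∈ minVecs L, ∀ y ∈ minVecs L, x ≠ y → x ≠ -y → ⟪x, y⟫ = 0 := by
  constructor
  · intro hC x hx y hy hxy hxy'
    have hbdd : BddAbove {t | ∃ x ∈ minVecs L, ∃ y ∈ minVecs L, x ≠ y ∧ x ≠ -y ∧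
        t = |⟪x, y⟫| / (‖x‖ * ‖y‖)} := by
      refine ⟨1, ?_⟩
      rintro t ⟨x, -, y, -, -, -, rfl⟩
      exact div_le_one_of_le₀ (abs_real_inner_le_norm x y) (by positivity)
    have hle := le_csSup hbdd ⟨x, hx, y, hy, hxy, hxy', rfl⟩
    rw [← coherence, hC] at hle
    have hxy0 : 0 < ‖x‖ * ‖y‖ := mul_pos (norm_pos_iff.mpr hx.2.1) (norm_pos_iff.mpr hy.2.1)
    rw [div_le_iff₀ hxy0, zero_mul] at hle
    exact abs_nonpos_iff.mp hle
  · intro h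
    refine le_antisymm (Real.sSup_nonpos ?_) (Real.sSup_nonneg ?_)
    · rintro t ⟨x, hx, y, hy, hxy, hxy', rfl⟩
      simp [h x hx y hy hxy hxy']
    · rintro t ⟨x, -, y, -, -, -, rfl⟩
      positivity

lemma coherence_ne_zero_of_eq_add {L : Set (Evec n)} (hmin : hasMinNorm L 1) {x v w : Evec n}
    (hx : x ∈ minVecs L) (hv : v ∈ L) (hw : w ∈ L) (hv0 : v ≠ 0) (hw0 : w ≠ 0) (hxvw : x = v + w)
    (hvw : |⟪v, w⟫| ≤ ‖v‖ * ‖w‖ / 2) : coherence L ≠ 0 := by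
  have hx1 := norm_eq_one_of_mem_minVecs hmin hx
  obtain ⟨hv1, hinner⟩ := norm_eq_one_and_inner_add_eq_half (hmin.2 v hv hv0) (hmin.2 w hw hw0)
    hvw (hxvw ▸ hx1.le)
  rw [← hxvw] at hinner
  intro hC
  have := coherence_eq_zero_iff.mp hC x hx v (mem_minVecs_of_norm_eq_one hmin hv hv1)
    (by rintro rfl; norm_num [hx1] at hinner)
    (by rintro rfl; norm_num [hv1] at hinner)
  norm_num [this] at hinner

end Lattice

section NearlyOrth

variable {n : ℕ} {b : Fin n → Evec n}

lemma coeff_eq_zero_of_mem_minVecs (hn : 2 ≤ n) (hb : LinearIndependent ℝ b)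
    (hmin : hasMinNorm (latticeOf b) 1) (hNO : NearlyOrth b) (hC : coherence (latticeOf b) = 0)
    {c : Fin n → ℤ} (hx : ∑ i, (c i : ℝ) • b i ∈ minVecs (latticeOf b)) {p q : Fin n}
    (hp : c p ≠ 0) (hqp : q ≠ p) : c q = 0 := by
  by_contra hq
  set w := (c p : ℝ) • b p
  set v := ∑ i ∈ Finset.univ.erase p, (c i : ℝ) • b i
  have hxvw : ∑ i, (c i : ℝ) • b i = v + w := (Finset.sum_erase_add _ _ (Finset.mem_univ p)).symm
  have hwL : w ∈ latticeOf b := by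
    have hbp := mem_latticeOf_self b p
    rw [latticeOf_eq_span] at hbp ⊢
    simpa only [w, Int.cast_smul_eq_zsmul, SetLike.mem_coe] using zsmul_mem hbp (c p)
  have hvL : v ∈ latticeOf b := by
    have hxL := hx.1
    rw [latticeOf_eq_span] at hxL hwL ⊢
    simpa [hxvw] using sub_mem hxL hwL
  have hv0 : v ≠ 0 := fun h => hq <| by
    exact_mod_cast linearIndependent_iff'.mp hb _ _ h q (by simp [hqp])
  have hw0 : w ≠ 0 := smul_ne_zero (Int.cast_ne_zero.mpr hp) (hb.ne_zero p)
  have hvV : v ∈ span ℝ (b '' {i | i ≠ p}) :=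
    sum_mem fun i hi => smul_mem _ _ (subset_span ⟨i, (Finset.mem_erase.mp hi).1, rfl⟩)
  exact coherence_ne_zero_of_eq_add hmin hx hvL hwL hv0 hw0 hxvw
    (hNO.abs_inner_smul_le hn hvV _) hC

lemma norm_eq_one_of_coherence_eq_zero (hn : 2 ≤ n) (hb : LinearIndependent ℝ b)
    (hWR : IsWellRounded (latticeOf b)) (hmin : hasMinNorm (latticeOf b) 1) (hNO : NearlyOrth b)
    (hC : coherence (latticeOf b) = 0) (i : Fin n) : ‖b i‖ = 1 := by
  have : Nonempty (Fin n) := ⟨i⟩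
  let B := basisOfLinearIndependentOfCardEqFinrank hb (by simp)
  obtain ⟨x, hx, hxi⟩ := B.exists_mem_coord_ne_zero hWR i
  obtain ⟨c, rfl⟩ := hx.1
  have hci : c i ≠ 0 := by
    have hB : ⇑B = b := coe_basisOfLinearIndependentOfCardEqFinrank hb _
    rw [Module.Basis.coord_apply, ← hB, Module.Basis.repr_sum_self] at hxi
    exact_mod_cast hxi
  have hx_eq : ∑ j, (c j : ℝ) • b j = (c i : ℝ) • b i := Finset.sum_eq_single i
    (fun j _ hji => by simp [coeff_eq_zero_of_mem_minVecs hn hb hmin hNO hC hx hci hji])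
    (by simp)
  have hnorm : |(c i : ℝ)| * ‖b i‖ = 1 := by
    rw [← Real.norm_eq_abs, ← norm_smul, ← hx_eq, norm_eq_one_of_mem_minVecs hmin hx]
  have hci1 : (1 : ℝ) ≤ |(c i : ℝ)| := by exact_mod_cast Int.one_le_abs hci
  have hbi : 1 ≤ ‖b i‖ := hmin.2 _ (mem_latticeOf_self b i) (hb.ne_zero i)
  nlinarith

end NearlyOrth

/-- `C(L) = 0` iff `L` is spanned over `ℤ` by an orthonormal basis
of `ℝⁿ`, i.e. is the image of `ℤⁿ` under an orthogonal transformation. -/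
theorem stmt_7 {n : ℕ} (hn : 2 ≤ n) (b : Fin n → Evec n) (hb : LinearIndependent ℝ b)
    (hWR : IsWellRounded (latticeOf b)) (hmin : hasMinNorm (latticeOf b) 1)
    (hNO : NearlyOrth b) :
    coherence (latticeOf b) = 0 ↔
      ∃ u : Fin n → Evec n, Orthonormal ℝ u ∧ latticeOf u = latticeOf b := by
  constructor
  · intro hC
    have hnorm := norm_eq_one_of_coherence_eq_zero hn hb hWR hmin hNO hC
    have hbmin (i : Fin n) : b i ∈ minVecs (latticeOf b) :=
      mem_minVecs_of_norm_eq_one hmin (mem_latticeOf_self b i) (hnorm i)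
    refine ⟨b, ⟨hnorm, fun i j hij => ?_⟩, rfl⟩
    exact coherence_eq_zero_iff.mp hC _ (hbmin i) _ (hbmin j) (hb.injective.ne hij)
      (hb.ne_neg hij)
  · rintro ⟨u, hu, hub⟩
    rw [← hub] at hmin ⊢
    refine coherence_eq_zero_iff.mpr fun x hx y hy hxy hxy' => ?_
    obtain ⟨k, hk⟩ := hu.exists_inner_eq_intCast hx.1 hy.1
    exact inner_eq_zero_of_inner_eq_intCast (norm_eq_one_of_mem_minVecs hmin hx)
      (norm_eq_one_of_mem_minVecs hmin hy) hxy hxy' hk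
end

section
/- For every n ≥ 3, no well-rounded lattice in ℝⁿ possessing a weakly nearly orthogonal basis is perfect. -/
open scoped RealInnerProductSpace
open Submodule Metric MeasureTheory

/-!
Let `w` be the component of the last basis vector `b k` orthogonal to the span `V` of the
others. Weak `π/3`-orthogonality gives `‖w‖² ≥ 3/4 ‖b k‖² ≥ 3/4 |L|²`, and every `x ∈ L`
satisfies `⟪x, w⟫ = c ‖w‖²`, where `c ∈ ℤ` is its `b k`-coefficient. For a minimal vector
Cauchy–Schwarz forces `c ∈ {-1, 0, 1}`, and two distinct minimal vectors with `c = 1` satisfy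
`x + x' = 2 w`: their components `x - w`, `x' - w` have norm at most `|L|/2` but differ by at
least `|L|`. Hence the vectors `⟪x, w⟫ x`, `x ∈ S(L)`, lie in a plane. If `L` were perfect they
would span `ℝⁿ`, since they are the images of the `x xᵀ` under `A ↦ A w`, and every vector is
`A w` for some symmetric `A`; this is impossible for `n ≥ 3`.
-/

open Matrix

section InnerProductSpace

variable {E : Type*} [NormedAddCommGroup E] [InnerProductSpace ℝ E]

lemma real_inner_self_sub_starProjection (V : Submodule ℝ E) [V.HasOrthogonalProjection]
    (v : E) : ⟪v, v - V.starProjection v⟫ = ‖v - V.starProjection v‖ ^ 2 := by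
  have h := V.starProjection_inner_eq_zero v _ (V.starProjection_apply_mem v)
  rw [← real_inner_self_eq_norm_sq, inner_sub_left _ _ (v - _),
    real_inner_comm _ (V.starProjection v), h, sub_zero]

lemma inner_sub_starProjection_mem_zmultiples {ι : Type*} {b : ι → E} {k : ι}
    {V : Submodule ℝ E} [V.HasOrthogonalProjection] (hV : ∀ j ≠ k, b j ∈ V) (j : ι) :
    ⟪b j, b k - V.starProjection (b k)⟫ ∈
      AddSubgroup.zmultiples (‖b k - V.starProjection (b k)‖ ^ 2) := by
  by_cases hj : j = k
  · rw [hj, real_inner_self_sub_starProjection]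
    exact AddSubgroup.mem_zmultiples _
  · rw [real_inner_comm, V.starProjection_inner_eq_zero _ _ (hV j hj)]
    exact zero_mem _

lemma inner_mem_zmultiples_of_mem_span_int {ι : Type*} {b : ι → E} {w : E} {t : ℝ}
    (hb : ∀ j, ⟪b j, w⟫ ∈ AddSubgroup.zmultiples t) {x : E}
    (hx : x ∈ span ℤ (Set.range b)) : ⟪x, w⟫ ∈ AddSubgroup.zmultiples t := by
  induction hx using Submodule.span_induction with
  | mem _ h => obtain ⟨j, rfl⟩ := h; exact hb j
  | zero => simp
  | add x y _ _ hx hy => rw [inner_add_left]; exact add_mem hx hy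
  | smul c x _ hx =>
    rw [← Int.cast_smul_eq_zsmul ℝ, real_inner_smul_left, ← zsmul_eq_mul]
    exact zsmul_mem hx c

lemma abs_le_one_of_inner_eq_int_mul {x w : E} {c : ℤ} (hw0 : w ≠ 0)
    (hc : ⟪x, w⟫ = c * ‖w‖ ^ 2) (hw : 3 / 4 * ‖x‖ ^ 2 ≤ ‖w‖ ^ 2) : |c| ≤ 1 := by
  have hwpos : 0 < ‖w‖ ^ 2 := by positivity
  have hCS : ⟪x, w⟫ * ⟪x, w⟫ ≤ ‖x‖ ^ 2 * ‖w‖ ^ 2 := by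
    simpa only [real_inner_self_eq_norm_sq] using real_inner_mul_inner_self_le x w
  rw [hc] at hCS
  have hc2 : (c : ℝ) ^ 2 < 2 ^ 2 := by
    refine lt_of_mul_lt_mul_right (a := ‖w‖ ^ 2 * ‖w‖ ^ 2) ?_ (by positivity)
    nlinarith
  obtain ⟨h1, h2⟩ := abs_lt_of_sq_lt_sq' (by exact_mod_cast hc2 : c ^ 2 < 2 ^ 2) (by norm_num)
  exact abs_le.2 ⟨by omega, by omega⟩

lemma add_eq_two_smul_of_inner_eq_norm_sq {x x' w : E} (hx : ⟪x, w⟫ = ‖w‖ ^ 2)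
    (hx' : ⟪x', w⟫ = ‖w‖ ^ 2) (hnorm : ‖x'‖ = ‖x‖) (hw : 3 / 4 * ‖x‖ ^ 2 ≤ ‖w‖ ^ 2)
    (hsub : ‖x‖ ≤ ‖x - x'‖) : x + x' = (2 : ℝ) • w := by
  have ha : ‖x - w‖ ^ 2 = ‖x‖ ^ 2 - ‖w‖ ^ 2 := by
    rw [norm_sub_sq_real, hx]; ring
  have ha' : ‖x' - w‖ ^ 2 = ‖x‖ ^ 2 - ‖w‖ ^ 2 := by
    rw [norm_sub_sq_real, hx', hnorm]; ring
  have hpar := parallelogram_law_with_norm ℝ (x - w) (x' - w)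
  rw [sub_sub_sub_cancel_right] at hpar
  have : ‖x - w + (x' - w)‖ = 0 := by nlinarith [norm_nonneg x]
  rw [norm_eq_zero] at this
  rw [two_smul]
  linear_combination (norm := module) this

lemma span_pair_ne_top [FiniteDimensional ℝ E] (hE : 2 < Module.finrank ℝ E) (x₁ x₂ : E) :
    span ℝ {x₁, x₂} ≠ ⊤ := by
  classical
  intro htop
  have hcard := finrank_span_le_card (R := ℝ) ({x₁, x₂} : Set E)
  rw [htop, finrank_top, Set.toFinset_insert, Set.toFinset_singleton] at hcard
  have := Finset.card_le_two (a := x₁) (b := x₂)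
  omega

end InnerProductSpace

lemma exists_subset_pair_of_add_eq {G : Type*} [AddGroup G] {s : Set G} {a : G}
    (h : ∀ x ∈ s, ∀ y ∈ s, x ≠ y → x + y = a) : ∃ x₁ x₂ : G, s ⊆ {x₁, x₂} := by
  rcases s.eq_empty_or_nonempty with rfl | ⟨x₁, hx₁⟩
  · exact ⟨0, 0, Set.empty_subset _⟩
  refine ⟨x₁, -x₁ + a, fun x hx => ?_⟩
  by_cases hxx : x = x₁
  · exact Or.inl hxx
  · exact Or.inr (eq_neg_add_of_add_eq (h x₁ hx₁ x hx (Ne.symm hxx)))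

lemma Matrix.exists_isSymm_mulVec_eq {K ι : Type*} [Field K] [Fintype ι] {w : ι → K}
    (hw : w ⬝ᵥ w ≠ 0) (v : ι → K) : ∃ A : Matrix ι ι K, A.IsSymm ∧ A *ᵥ w = v := by
  refine ⟨(w ⬝ᵥ w)⁻¹ • (vecMulVec v w + vecMulVec w v) -
    ((w ⬝ᵥ w)⁻¹ ^ 2 * (w ⬝ᵥ v)) • vecMulVec w w, ?_, ?_⟩
  · simp [IsSymm, transpose_vecMulVec, add_comm]
  · simp only [sub_mulVec, smul_mulVec, add_mulVec, vecMulVec_mulVec, op_smul_eq_smul,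
      dotProduct_comm v w]
    match_scalars
    · field_simp
    · field_simp
      ring

section Lattice

variable {n : ℕ}

open Real in
lemma three_div_four_mul_norm_sq_le_norm_sub_starProjection_sq {v : Evec n}
    {V : Submodule ℝ (Evec n)} (h : π / 3 ≤ subAngle v V) :
    3 / 4 * ‖v‖ ^ 2 ≤ ‖v - V.starProjection v‖ ^ 2 := by
  have hproj : ‖V.starProjection v‖ ≤ ‖v‖ / 2 := by
    rcases (norm_nonneg v).eq_or_lt with hv | hv
    · rw [← hv, norm_eq_zero.1 hv.symm, map_zero, norm_zero, zero_div]
    set r := ‖V.starProjection v‖ / ‖v‖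
    have hr : r ≤ 1 := div_le_one_of_le₀ (V.norm_starProjection_apply_le v) hv.le
    have hr0 : 0 ≤ r := by positivity
    have : r ≤ 1 / 2 := by
      have := cos_le_cos_of_nonneg_of_le_pi (by positivity) (arccos_le_pi r) h
      rwa [cos_arccos (by linarith) hr, cos_pi_div_three] at this
    rw [div_le_iff₀ hv] at this
    linarith
  have := norm_sq_eq_add_norm_sq_starProjection v V
  rw [V.starProjection_orthogonal_val] at this
  nlinarith [norm_nonneg (V.starProjection v)]

lemma coe_span_int_range (b : Fin n → Evec n) :
    (span ℤ (Set.range b) : Set (Evec n)) = latticeOf b := by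
  ext x
  simp only [SetLike.mem_coe, mem_span_range_iff_exists_fun, latticeOf, Set.mem_ofPred_eq,
    Int.cast_smul_eq_zsmul, eq_comm]

lemma norm_eq_of_mem_minVecs {L : Set (Evec n)} {x y : Evec n} (hx : x ∈ minVecs L)
    (hy : y ∈ minVecs L) : ‖x‖ = ‖y‖ :=
  le_antisymm (hx.2.2 y hy.1 hy.2.1) (hy.2.2 x hx.1 hx.2.1)

lemma neg_mem_minVecs {L : Submodule ℤ (Evec n)} {x : Evec n}
    (hx : x ∈ minVecs (L : Set (Evec n))) : -x ∈ minVecs (L : Set (Evec n)) :=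
  ⟨L.neg_mem hx.1, neg_ne_zero.2 hx.2.1, by simpa only [norm_neg] using hx.2.2⟩

lemma exists_inner_smul_mem_span_pair (L : Submodule ℤ (Evec n)) {w v : Evec n}
    (hw0 : w ≠ 0) (hL : ∀ x ∈ L, ⟪x, w⟫ ∈ AddSubgroup.zmultiples (‖w‖ ^ 2))
    (hvL : v ∈ L) (hv0 : v ≠ 0) (hvw : 3 / 4 * ‖v‖ ^ 2 ≤ ‖w‖ ^ 2) :
    ∃ x₁ x₂ : Evec n, ∀ x ∈ minVecs (L : Set (Evec n)), ⟪x, w⟫ • x ∈ span ℝ {x₁, x₂} := by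
  have hmin : ∀ x ∈ minVecs (L : Set (Evec n)), 3 / 4 * ‖x‖ ^ 2 ≤ ‖w‖ ^ 2 := fun x hx => by
    nlinarith [hx.2.2 v hvL hv0, norm_nonneg x]
  set P := {x ∈ minVecs (L : Set (Evec n)) | ⟪x, w⟫ = ‖w‖ ^ 2}
  obtain ⟨x₁, x₂, hP⟩ : ∃ x₁ x₂, P ⊆ {x₁, x₂} := by
    refine exists_subset_pair_of_add_eq (a := (2 : ℝ) • w) fun x hx x' hx' hne => ?_
    refine add_eq_two_smul_of_inner_eq_norm_sq hx.2 hx'.2 (norm_eq_of_mem_minVecs hx'.1 hx.1)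
      (hmin x hx.1) ?_
    exact hx.1.2.2 _ (L.sub_mem hx.1.1 hx'.1.1) (sub_ne_zero.2 hne)
  have hPspan : ∀ x ∈ P, x ∈ span ℝ {x₁, x₂} := fun x hx => subset_span (hP hx)
  refine ⟨x₁, x₂, fun x hx => ?_⟩
  obtain ⟨c, hc⟩ := AddSubgroup.mem_zmultiples_iff.1 (hL x hx.1)
  rw [zsmul_eq_mul] at hc
  obtain ⟨hc₁, hc₂⟩ := abs_le.1 (abs_le_one_of_inner_eq_int_mul hw0 hc.symm (hmin x hx))
  rcases (by omega : c = -1 ∨ c = 0 ∨ c = 1) with rfl | rfl | rfl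
  · have : -x ∈ P := ⟨neg_mem_minVecs hx, by rw [inner_neg_left, ← hc]; push_cast; ring⟩
    rw [← hc, show ((-1 : ℤ) * ‖w‖ ^ 2) • x = ‖w‖ ^ 2 • -x by push_cast; module]
    exact smul_mem _ _ (hPspan _ this)
  · rw [← hc]; simp
  · rw [← hc]
    exact smul_mem _ _ (hPspan x ⟨hx, by rw [← hc]; push_cast; ring⟩)

lemma EuclideanSpace.vecMulVec_self_mulVec (x w : Evec n) :
    vecMulVec ⇑x ⇑x *ᵥ ⇑w = ⟪x, w⟫ • ⇑x := by
  rw [vecMulVec_mulVec, op_smul_eq_smul, EuclideanSpace.inner_eq_star_dotProduct]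
  simp [dotProduct_comm]

lemma span_inner_smul_minVecs_eq_top {L : Set (Evec n)} (hL : IsPerfect L)
    {w : Evec n} (hw : w ≠ 0) : span ℝ ((fun x => ⟪x, w⟫ • x) '' minVecs L) = ⊤ := by
  let Φ : Matrix (Fin n) (Fin n) ℝ →ₗ[ℝ] Evec n :=
    (WithLp.linearEquiv 2 ℝ (Fin n → ℝ)).symm.toLinearMap ∘ₗ LinearMap.applyₗ (⇑w) ∘ₗ
      Matrix.toLin'.toLinearMap
  have hΦ : Φ ∘ (fun x : Evec n => Matrix.of fun i j => x i * x j) = fun x => ⟪x, w⟫ • x := by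
    ext x i
    exact congrFun (EuclideanSpace.vecMulVec_self_mulVec x w) i
  refine eq_top_iff'.2 fun v => ?_
  obtain ⟨A, hA, hAw⟩ := exists_isSymm_mulVec_eq (w := ⇑w) (by simpa using hw) v
  have hΦA : Φ A = v := by simp [Φ, hAw]
  rw [← hΦA, ← hΦ, Set.image_comp]
  exact apply_mem_span_image_of_mem_span Φ (hL A hA)

end Lattice

theorem stmt_14_general (n : ℕ) (hn : 3 ≤ n) (b : Fin n → Evec n)
    (hb : LinearIndependent ℝ b) (hW : WeaklyNearlyOrth b) :
    ¬ IsPerfect (latticeOf b) := by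
  intro hperf
  let k : Fin n := ⟨n - 1, by omega⟩
  let V := span ℝ (b '' {j | j < k})
  let w := b k - V.starProjection (b k)
  have hbV : ∀ j ≠ k, b j ∈ V := fun j hj =>
    subset_span ⟨j, by simp [Fin.lt_def, Fin.ext_iff, k] at hj ⊢; omega, rfl⟩
  have hw : 3 / 4 * ‖b k‖ ^ 2 ≤ ‖w‖ ^ 2 :=
    three_div_four_mul_norm_sq_le_norm_sub_starProjection_sq (hW k (by simp [k]; omega))
  have hw0 : w ≠ 0 := by
    intro h
    rw [h, norm_zero] at hw
    have := norm_pos_iff.2 (hb.ne_zero k)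
    nlinarith
  rw [← coe_span_int_range] at hperf
  obtain ⟨x₁, x₂, hcover⟩ := exists_inner_smul_mem_span_pair _ hw0
    (fun x hx => inner_mem_zmultiples_of_mem_span_int
      (inner_sub_starProjection_mem_zmultiples hbV) hx)
    (subset_span ⟨k, rfl⟩) (hb.ne_zero k) hw
  refine span_pair_ne_top (by rw [finrank_euclideanSpace_fin]; omega) x₁ x₂ (eq_top_iff.2 ?_)
  rw [← span_inner_smul_minVecs_eq_top hperf hw0, span_le]
  rintro _ ⟨x, hx, rfl⟩
  exact hcover x hx

/-- for `n ≥ 3`, no well-rounded lattice with a weakly nearly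
orthogonal basis is perfect. -/
theorem stmt_14 (n : ℕ) (hn : 3 ≤ n) (b : Fin n → Evec n)
    (hb : LinearIndependent ℝ b) (hW : WeaklyNearlyOrth b)
    (hWR : IsWellRounded (latticeOf b)) :
    ¬ IsPerfect (latticeOf b) :=
  stmt_14_general n hn b hb hW
end
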